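/- arXiv:2311.05321 — 7 statements merged into one kernel-verified Lean document; each statement's English description precedes it below -/
import Mathlib

section
/- Let (u,p) ∈ V × Q be arbitrary with (u,p) ≠ (0,0). Then γ · (‖u‖_V² + ‖p‖_Q²)^{1/2} ≤ S(u,p), where S(u,p) := sup over (0,0) ≠ (w,r) ∈ V × Q of |A((u,p);(w,r))| / (‖w‖_V² + ‖r‖_Q²)^{1/2}, and γ := (1/2) · (α⁻²(1 + 2C_b²M²)² + 2C_b²)^{-1/2}. In other words, the combined Oseen-type saddle-point form A satisfies an inf-sup condition in its second argument with the explicit constant γ depending only on α, M, C_b. -/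
/-!
Testing `A((u,p); ·)` against `(u,p)` itself, the two coupling terms cancel in the real part,
so coercivity gives `α‖u‖² ≤ S t` with `S = S(u,p)` and `t = ‖(u,p)‖_X`. Testing against
`(ṽ,0)`, where `ṽ` is the right inverse of the coupling at `p`, gives
`‖p‖² ≤ (S + M‖u‖)‖ṽ‖ ≤ C_b‖p‖(S + M‖u‖)`. Together these yield the quadratic inequality
`t² ≤ K S t + 2C_b² S²` with `K = α⁻¹(1 + 2C_b²M²)`, whence `t ≤ 2 √(K² + 2C_b²) S`.
-/

open Real

lemma le_two_mul_sqrt_mul_of_sq_le_mul_add {K c s t : ℝ} (hc : 0 ≤ c) (hs : 0 ≤ s)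
    (ht : 0 ≤ t) (h : t ^ 2 ≤ K * s * t + c * s ^ 2) : t ≤ 2 * √(K ^ 2 + c) * s := by
  have hsq : t ^ 2 ≤ (2 * √(K ^ 2 + c) * s) ^ 2 := by
    rw [mul_pow, mul_pow, sq_sqrt (by positivity)]
    nlinarith [sq_nonneg (K * s - t), sq_nonneg (K * s), sq_nonneg s]
  exact (pow_le_pow_iff_left₀ ht (by positivity) two_ne_zero).1 hsq

lemma half_div_sqrt_mul_le_of_coercive_of_infsup {α M C_b s x y : ℝ} (hα : 0 < α)
    (hs : 0 ≤ s) (hx : α * x ^ 2 ≤ s * √(x ^ 2 + y ^ 2))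
    (hy : y ^ 2 ≤ (C_b * (s + M * x)) ^ 2) :
    (1 / 2) / √(α⁻¹ ^ 2 * (1 + 2 * C_b ^ 2 * M ^ 2) ^ 2 + 2 * C_b ^ 2) *
      √(x ^ 2 + y ^ 2) ≤ s := by
  set t := √(x ^ 2 + y ^ 2)
  set K := α⁻¹ * (1 + 2 * C_b ^ 2 * M ^ 2)
  have hx' : x ^ 2 ≤ α⁻¹ * (s * t) := by
    rw [← div_eq_inv_mul, le_div_iff₀ hα]; linarith
  have hy' : y ^ 2 ≤ 2 * C_b ^ 2 * s ^ 2 + 2 * C_b ^ 2 * M ^ 2 * x ^ 2 := by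
    nlinarith [mul_nonneg (sq_nonneg C_b) (sq_nonneg (s - M * x))]
  have hquad : t ^ 2 ≤ K * s * t + 2 * C_b ^ 2 * s ^ 2 := by
    have h1 : 0 ≤ 1 + 2 * C_b ^ 2 * M ^ 2 := by positivity
    rw [sq_sqrt (by positivity)]
    nlinarith [mul_le_mul_of_nonneg_left hx' h1]
  have hR : 0 < √(α⁻¹ ^ 2 * (1 + 2 * C_b ^ 2 * M ^ 2) ^ 2 + 2 * C_b ^ 2) :=
    sqrt_pos.2 (by positivity)
  have := le_two_mul_sqrt_mul_of_sq_le_mul_add (by positivity) hs (sqrt_nonneg _) hquad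
  rw [mul_pow] at this
  rw [div_mul_eq_mul_div, div_le_iff₀ hR]
  linarith

section ProdDualNorm

variable {V Q : Type*} [NormedAddCommGroup V] [NormedAddCommGroup Q]

/-- `S(u,p)` is `prodDualNorm (A (u,p))`; the Euclidean norm `√(‖w‖² + ‖r‖²)` is written out
because Mathlib's norm on `V × Q` is the sup norm. -/
noncomputable def prodDualNorm (f : V × Q → ℂ) : ℝ :=
  sSup {s : ℝ | ∃ (w : V) (r : Q), (w, r) ≠ (0, 0) ∧
    s = ‖f (w, r)‖ / √(‖w‖ ^ 2 + ‖r‖ ^ 2)}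

lemma sqrt_norm_sq_add_norm_sq_pos {w : V} {r : Q} (h : (w, r) ≠ (0, 0)) :
    0 < √(‖w‖ ^ 2 + ‖r‖ ^ 2) := by
  rw [sqrt_pos]
  rcases eq_or_ne w 0 with rfl | hw
  · have hr : r ≠ 0 := fun hr => h (by rw [hr])
    have := norm_pos_iff.2 hr
    positivity
  · have := norm_pos_iff.2 hw
    positivity

lemma prodDualNorm_nonneg (f : V × Q → ℂ) : 0 ≤ prodDualNorm f :=
  Real.sSup_nonneg fun _ ⟨_, _, _, hs⟩ => hs ▸ by positivity

lemma norm_apply_le_prodDualNorm_mul {f : V × Q → ℂ} {C : ℝ}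
    (hC : ∀ w r, ‖f (w, r)‖ ≤ C * √(‖w‖ ^ 2 + ‖r‖ ^ 2)) (w : V) (r : Q) :
    ‖f (w, r)‖ ≤ prodDualNorm f * √(‖w‖ ^ 2 + ‖r‖ ^ 2) := by
  rcases eq_or_ne (w, r) (0, 0) with h | h
  · obtain ⟨rfl, rfl⟩ := Prod.mk_eq_zero.1 h
    simpa using hC 0 0
  have hpos := sqrt_norm_sq_add_norm_sq_pos h
  have hbdd : BddAbove {s : ℝ | ∃ (w : V) (r : Q), (w, r) ≠ (0, 0) ∧
      s = ‖f (w, r)‖ / √(‖w‖ ^ 2 + ‖r‖ ^ 2)} := by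
    refine ⟨C, ?_⟩
    rintro s ⟨w', r', h', rfl⟩
    exact (div_le_iff₀ (sqrt_norm_sq_add_norm_sq_pos h')).2 (hC w' r')
  rw [← div_le_iff₀ hpos]
  exact le_csSup hbdd ⟨w, r, h, rfl⟩

end ProdDualNorm

section SaddleForm

variable {V Q : Type*} [NormedAddCommGroup V] [Module ℂ V] [NormedAddCommGroup Q] [Module ℂ Q]
  (a : V →ₗ[ℂ] V →ₛₗ[starRingEnd ℂ] ℂ) (d : Q →ₗ[ℂ] V →ₛₗ[starRingEnd ℂ] ℂ)

def saddleForm (x y : V × Q) : ℂ :=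
  a x.1 y.1 + d x.2 y.1 - starRingEnd ℂ (d y.2 x.1)

lemma saddleForm_self_re (u : V) (p : Q) : (saddleForm a d (u, p) (u, p)).re = (a u u).re := by
  simp [saddleForm]

lemma saddleForm_zero_right (u v : V) (p : Q) :
    saddleForm a d (u, p) (v, 0) = a u v + d p v := by
  simp [saddleForm]

lemma norm_saddleForm_le {M M_d : ℝ} (hcont : ∀ u v : V, ‖a u v‖ ≤ M * ‖u‖ * ‖v‖)
    (hdbdd : ∀ (q : Q) (v : V), ‖d q v‖ ≤ M_d * ‖q‖ * ‖v‖) (u : V) (p : Q) (w : V) (r : Q) :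
    ‖saddleForm a d (u, p) (w, r)‖ ≤
      (|M| * ‖u‖ + |M_d| * ‖p‖ + |M_d| * ‖u‖) * √(‖w‖ ^ 2 + ‖r‖ ^ 2) := by
  have hw : ‖w‖ ≤ √(‖w‖ ^ 2 + ‖r‖ ^ 2) :=
    le_sqrt_of_sq_le (le_add_of_nonneg_right (by positivity))
  have hr : ‖r‖ ≤ √(‖w‖ ^ 2 + ‖r‖ ^ 2) :=
    le_sqrt_of_sq_le (le_add_of_nonneg_left (by positivity))
  calc ‖saddleForm a d (u, p) (w, r)‖ ≤ ‖a u w‖ + ‖d p w‖ + ‖d r u‖ := by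
        rw [saddleForm, ← RCLike.norm_conj (d r u)]
        exact norm_sub_le_of_le (norm_add_le _ _) le_rfl
    _ ≤ M * ‖u‖ * ‖w‖ + M_d * ‖p‖ * ‖w‖ + M_d * ‖u‖ * ‖r‖ := by
        linarith [hcont u w, hdbdd p w, hdbdd r u]
    _ ≤ |M| * ‖u‖ * ‖w‖ + |M_d| * ‖p‖ * ‖w‖ + |M_d| * ‖u‖ * ‖r‖ := by
        gcongr <;> exact le_abs_self _
    _ ≤ |M| * ‖u‖ * √(‖w‖ ^ 2 + ‖r‖ ^ 2) + |M_d| * ‖p‖ * √(‖w‖ ^ 2 + ‖r‖ ^ 2)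
          + |M_d| * ‖u‖ * √(‖w‖ ^ 2 + ‖r‖ ^ 2) := by gcongr
    _ = _ := by ring

variable {a d} {u : V} {p : Q} {s : ℝ}
  (hs : ∀ w r, ‖saddleForm a d (u, p) (w, r)‖ ≤ s * √(‖w‖ ^ 2 + ‖r‖ ^ 2))
include hs

lemma coercive_mul_sq_norm_le {α : ℝ} (hcoer : ∀ v : V, α * ‖v‖ ^ 2 ≤ (a v v).re) :
    α * ‖u‖ ^ 2 ≤ s * √(‖u‖ ^ 2 + ‖p‖ ^ 2) :=
  calc α * ‖u‖ ^ 2 ≤ (a u u).re := hcoer u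
    _ = (saddleForm a d (u, p) (u, p)).re := (saddleForm_self_re a d u p).symm
    _ ≤ ‖saddleForm a d (u, p) (u, p)‖ := Complex.re_le_norm _
    _ ≤ _ := hs u p

lemma sq_norm_le_of_rightInverse {M C_b : ℝ} (hcont : ∀ u v : V, ‖a u v‖ ≤ M * ‖u‖ * ‖v‖)
    (hinv : ∀ q : Q, ∃ vt : V, d q vt = (‖q‖ : ℂ) ^ 2 ∧ ‖vt‖ ≤ C_b * ‖q‖) :
    ‖p‖ ^ 2 ≤ (C_b * (s + M * ‖u‖)) ^ 2 := by
  obtain ⟨vt, hdvt, hvt⟩ := hinv p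
  have hp : ‖p‖ ^ 2 ≤ (s + M * ‖u‖) * ‖vt‖ := by
    have htest : saddleForm a d (u, p) (vt, 0) - a u vt = (‖p‖ : ℂ) ^ 2 := by
      rw [saddleForm_zero_right, hdvt, add_sub_cancel_left]
    have hsvt := hs vt 0
    rw [norm_zero, zero_pow two_ne_zero, add_zero, sqrt_sq (norm_nonneg _)] at hsvt
    calc ‖p‖ ^ 2 = ‖saddleForm a d (u, p) (vt, 0) - a u vt‖ := by
          rw [htest, norm_pow, Complex.norm_real, norm_norm]
      _ ≤ ‖saddleForm a d (u, p) (vt, 0)‖ + ‖a u vt‖ := norm_sub_le _ _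
      _ ≤ (s + M * ‖u‖) * ‖vt‖ := by linarith [hcont u vt]
  rcases eq_or_ne p 0 with rfl | hp0
  · simpa using sq_nonneg (C_b * (s + M * ‖u‖))
  have hpos : 0 < ‖p‖ := norm_pos_iff.2 hp0
  have hX : 0 < s + M * ‖u‖ := by nlinarith [norm_nonneg vt]
  have hle : ‖p‖ ≤ C_b * (s + M * ‖u‖) := by
    nlinarith [mul_le_mul_of_nonneg_left hvt hX.le]
  exact pow_le_pow_left₀ hpos.le hle 2

end SaddleForm

theorem oseen_saddle_infsup_second_argument_general
    {V Q : Type*} [NormedAddCommGroup V] [InnerProductSpace ℂ V]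
    [NormedAddCommGroup Q] [InnerProductSpace ℂ Q]
    (a : V →ₗ[ℂ] V →ₛₗ[starRingEnd ℂ] ℂ)
    (d : Q →ₗ[ℂ] V →ₛₗ[starRingEnd ℂ] ℂ)
    (α M M_d C_b : ℝ) (hα : 0 < α)
    (hcoer : ∀ v : V, α * ‖v‖ ^ 2 ≤ (a v v).re)
    (hcont : ∀ u v : V, ‖a u v‖ ≤ M * ‖u‖ * ‖v‖)
    (hdbdd : ∀ (q : Q) (v : V), ‖d q v‖ ≤ M_d * ‖q‖ * ‖v‖)
    (hinv : ∀ q : Q, ∃ vt : V, d q vt = (‖q‖ : ℂ) ^ 2 ∧ ‖vt‖ ≤ C_b * ‖q‖)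
    (A : V × Q → V × Q → ℂ)
    (hA : ∀ (u : V) (p : Q) (v : V) (q : Q),
      A (u, p) (v, q) = a u v + d p v - starRingEnd ℂ (d q u))
    (γ : ℝ)
    (hγ : γ = (1 / 2) / Real.sqrt (α⁻¹ ^ 2 * (1 + 2 * C_b ^ 2 * M ^ 2) ^ 2 + 2 * C_b ^ 2))
    (u : V) (p : Q) :
    γ * Real.sqrt (‖u‖ ^ 2 + ‖p‖ ^ 2) ≤
      sSup {s : ℝ | ∃ (w : V) (r : Q), (w, r) ≠ (0, 0) ∧
        s = ‖A (u, p) (w, r)‖ / Real.sqrt (‖w‖ ^ 2 + ‖r‖ ^ 2)} := by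
  obtain rfl : A = saddleForm a d := funext fun x => funext fun y => hA x.1 x.2 y.1 y.2
  subst hγ
  change _ ≤ prodDualNorm (saddleForm a d (u, p))
  have hs := norm_apply_le_prodDualNorm_mul (norm_saddleForm_le a d hcont hdbdd u p)
  exact half_div_sqrt_mul_le_of_coercive_of_infsup hα (prodDualNorm_nonneg _)
    (coercive_mul_sq_norm_le hs hcoer) (sq_norm_le_of_rightInverse hs hcont hinv)

/-- The combined Oseen-type saddle-point form `A` on `X = V × Q` satisfies an
inf-sup condition in its second argument with explicit constant
`γ = (1/2)·(α⁻²(1+2C_b²M²)² + 2C_b²)^(-1/2)`. -/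
theorem oseen_saddle_infsup_second_argument
    {V Q : Type*} [NormedAddCommGroup V] [InnerProductSpace ℂ V] [CompleteSpace V]
    [NormedAddCommGroup Q] [InnerProductSpace ℂ Q] [CompleteSpace Q]
    (a : V →ₗ[ℂ] V →ₛₗ[starRingEnd ℂ] ℂ)
    (d : Q →ₗ[ℂ] V →ₛₗ[starRingEnd ℂ] ℂ)
    (α M M_d C_b : ℝ) (hα : 0 < α) (hM : 0 < M) (hMd : 0 < M_d) (hCb : 0 < C_b)
    (hcoer : ∀ v : V, α * ‖v‖ ^ 2 ≤ (a v v).re)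
    (hcont : ∀ u v : V, ‖a u v‖ ≤ M * ‖u‖ * ‖v‖)
    (hdbdd : ∀ (q : Q) (v : V), ‖d q v‖ ≤ M_d * ‖q‖ * ‖v‖)
    (hinv : ∀ q : Q, ∃ vt : V, d q vt = (‖q‖ : ℂ) ^ 2 ∧ ‖vt‖ ≤ C_b * ‖q‖)
    (A : V × Q → V × Q → ℂ)
    (hA : ∀ (u : V) (p : Q) (v : V) (q : Q),
      A (u, p) (v, q) = a u v + d p v - starRingEnd ℂ (d q u))
    (γ : ℝ)
    (hγ : γ = (1 / 2) / Real.sqrt (α⁻¹ ^ 2 * (1 + 2 * C_b ^ 2 * M ^ 2) ^ 2 + 2 * C_b ^ 2))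
    (u : V) (p : Q) (hup : (u, p) ≠ (0, 0)) :
    γ * Real.sqrt (‖u‖ ^ 2 + ‖p‖ ^ 2) ≤
      sSup {s : ℝ | ∃ (w : V) (r : Q), (w, r) ≠ (0, 0) ∧
        s = ‖A (u, p) (w, r)‖ / Real.sqrt (‖w‖ ^ 2 + ‖r‖ ^ 2)} :=
  oseen_saddle_infsup_second_argument_general a d α M M_d C_b hα hcoer hcont hdbdd hinv A hA γ hγ u
    p
end

section
/- Let (u,p) ∈ V × Q be arbitrary with (u,p) ≠ (0,0). Then γ · (‖u‖_V² + ‖p‖_Q²)^{1/2} ≤ S*(u,p), where S*(u,p) := sup over (0,0) ≠ (w,r) ∈ V × Q of |A((w,r);(u,p))| / (‖w‖_V² + ‖r‖_Q²)^{1/2}, and γ := (1/2) · (α⁻²(1 + 2C_b²M²)² + 2C_b²)^{-1/2}. In other words, the combined Oseen-type saddle-point form A also satisfies an inf-sup condition in its first argument, with the same explicit constant γ depending only on α, M, C_b. -/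
/-!
Test the form against `(w, r) = (l • u - ṽ, l • p)`, where `d(p, ṽ) = ‖p‖²`,
`‖ṽ‖ ≤ C_b‖p‖` and `l = α⁻¹(1 + 2C_b²M²)`. In `Re A((w, r); (u, p))` the term `l · d(p, u)`
cancels against its conjugate, coercivity turns `l · Re a(u, u)` into
`(1 + 2C_b²M²)‖u‖²`, and this absorbs the cross term `Re a(ṽ, u)`, leaving at least
`¾(‖u‖² + ‖p‖²)`. Since `‖(w, r)‖ ≤ √(2(l² + 2C_b²)) ‖(u, p)‖`, the quotient at this test pair is
at least `3 / (4√2) · (l² + 2C_b²)^(-1/2) ‖(u, p)‖ ≥ γ ‖(u, p)‖`.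
-/

open ComplexConjugate

section PairNorm

variable {E F : Type*} [NormedAddCommGroup E] [NormedAddCommGroup F]

lemma norm_sq_add_norm_sq_pos {w : E} {r : F} (h : (w, r) ≠ (0, 0)) :
    0 < ‖w‖ ^ 2 + ‖r‖ ^ 2 := by
  by_cases hw : w = 0
  · have hr : r ≠ 0 := fun hr => h (by rw [hw, hr])
    have := norm_pos_iff.mpr hr
    positivity
  · have := norm_pos_iff.mpr hw
    positivity

lemma norm_le_sqrt_norm_sq_add_norm_sq_left (w : E) (r : F) : ‖w‖ ≤ √(‖w‖ ^ 2 + ‖r‖ ^ 2) :=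
  Real.le_sqrt_of_sq_le (le_add_of_nonneg_right (sq_nonneg _))

lemma norm_le_sqrt_norm_sq_add_norm_sq_right (w : E) (r : F) : ‖r‖ ≤ √(‖w‖ ^ 2 + ‖r‖ ^ 2) :=
  Real.le_sqrt_of_sq_le (le_add_of_nonneg_left (sq_nonneg _))

theorem le_sSup_div_sqrt_norm_sq_add_norm_sq (f : E → F → ℝ) {C c : ℝ}
    (hC : ∀ w r, f w r ≤ C * √(‖w‖ ^ 2 + ‖r‖ ^ 2)) {w₀ : E} {r₀ : F} (h₀ : (w₀, r₀) ≠ (0, 0))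
    (hc : c * √(‖w₀‖ ^ 2 + ‖r₀‖ ^ 2) ≤ f w₀ r₀) :
    c ≤ sSup {s : ℝ | ∃ (w : E) (r : F), (w, r) ≠ (0, 0) ∧
      s = f w r / √(‖w‖ ^ 2 + ‖r‖ ^ 2)} := by
  have hbdd : BddAbove {s : ℝ | ∃ (w : E) (r : F), (w, r) ≠ (0, 0) ∧
      s = f w r / √(‖w‖ ^ 2 + ‖r‖ ^ 2)} := by
    refine ⟨C, ?_⟩
    rintro s ⟨w, r, h, rfl⟩
    exact (div_le_iff₀ (Real.sqrt_pos.mpr (norm_sq_add_norm_sq_pos h))).mpr (hC w r)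
  refine le_csSup_of_le hbdd ⟨w₀, r₀, h₀, rfl⟩ ?_
  exact (le_div_iff₀ (Real.sqrt_pos.mpr (norm_sq_add_norm_sq_pos h₀))).mpr hc

theorem le_sSup_div_sqrt_of_test_pair (f : E → F → ℝ) {C c K β n : ℝ}
    (hC : ∀ w r, f w r ≤ C * √(‖w‖ ^ 2 + ‖r‖ ^ 2)) (hc : 0 ≤ c) (hn : 0 < n) (hβ : 0 < β)
    (hcK : c * K ≤ β) {w₀ : E} {r₀ : F} (hsize : √(‖w₀‖ ^ 2 + ‖r₀‖ ^ 2) ≤ K * n)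
    (hval : β * n ^ 2 ≤ f w₀ r₀) :
    c * n ≤ sSup {s : ℝ | ∃ (w : E) (r : F), (w, r) ≠ (0, 0) ∧
      s = f w r / √(‖w‖ ^ 2 + ‖r‖ ^ 2)} := by
  -- `hC` forces `f 0 0 ≤ 0 < β n²`, so the test pair is nonzero.
  have h₀ : (w₀, r₀) ≠ (0, 0) := by
    rintro ⟨⟩
    have h00 : f 0 0 ≤ 0 := by simpa using hC 0 0
    have : 0 < β * n ^ 2 := by positivity
    linarith
  refine le_sSup_div_sqrt_norm_sq_add_norm_sq f hC h₀ ?_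
  calc c * n * √(‖w₀‖ ^ 2 + ‖r₀‖ ^ 2) ≤ c * n * (K * n) := by gcongr
    _ = c * K * n ^ 2 := by ring
    _ ≤ β * n ^ 2 := by gcongr
    _ ≤ f w₀ r₀ := hval

end PairNorm

lemma re_saddle_form_smul_sub {V Q : Type*} [AddCommGroup V] [Module ℂ V] [AddCommGroup Q]
    [Module ℂ Q] (a : V →ₗ[ℂ] V →ₛₗ[starRingEnd ℂ] ℂ) (d : Q →ₗ[ℂ] V →ₛₗ[starRingEnd ℂ] ℂ)
    (u vt : V) (p : Q) (l t : ℝ) (hvt : d p vt = t) :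
    (a ((l : ℂ) • u - vt) u + d ((l : ℂ) • p) u - conj (d p ((l : ℂ) • u - vt))).re =
      l * (a u u).re - (a vt u).re + t := by
  simp only [map_sub, map_smul, map_smulₛₗ, LinearMap.sub_apply, LinearMap.smul_apply, hvt,
    smul_eq_mul, Complex.conj_ofReal, map_mul, Complex.sub_re, Complex.add_re, Complex.mul_re,
    Complex.ofReal_re, Complex.ofReal_im, Complex.conj_re, Complex.conj_im]
  ring

section Normed

variable {V Q : Type*} [NormedAddCommGroup V] [NormedSpace ℂ V] [NormedAddCommGroup Q]
  [NormedSpace ℂ Q]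

lemma norm_saddle_form_le (a : V →ₗ[ℂ] V →ₛₗ[starRingEnd ℂ] ℂ)
    (d : Q →ₗ[ℂ] V →ₛₗ[starRingEnd ℂ] ℂ) {M M_d : ℝ} (hM : 0 ≤ M) (hMd : 0 ≤ M_d)
    (hcont : ∀ u v : V, ‖a u v‖ ≤ M * ‖u‖ * ‖v‖)
    (hdbdd : ∀ (q : Q) (v : V), ‖d q v‖ ≤ M_d * ‖q‖ * ‖v‖) (u w : V) (p r : Q) :
    ‖a w u + d r u - conj (d p w)‖ ≤
      (M * ‖u‖ + M_d * ‖u‖ + M_d * ‖p‖) * √(‖w‖ ^ 2 + ‖r‖ ^ 2) := by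
  have hw := norm_le_sqrt_norm_sq_add_norm_sq_left w r
  have hr := norm_le_sqrt_norm_sq_add_norm_sq_right w r
  calc ‖a w u + d r u - conj (d p w)‖
      ≤ ‖a w u‖ + ‖d r u‖ + ‖d p w‖ := by
        grw [norm_sub_le, norm_add_le, RCLike.norm_conj]
    _ ≤ M * ‖w‖ * ‖u‖ + M_d * ‖r‖ * ‖u‖ + M_d * ‖p‖ * ‖w‖ := by
        grw [hcont, hdbdd, hdbdd]
    _ ≤ _ := by
        generalize √(‖w‖ ^ 2 + ‖r‖ ^ 2) = D at hw hr ⊢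
        grw [hw, hr]
        exact le_of_eq (by ring)

lemma sqrt_norm_smul_sub_sq_add_norm_smul_sq_le {l C : ℝ} (hl : 0 ≤ l) {u vt : V} {p : Q}
    (hvt : ‖vt‖ ≤ C * ‖p‖) :
    √(‖(l : ℂ) • u - vt‖ ^ 2 + ‖(l : ℂ) • p‖ ^ 2) ≤
      √(2 * (l ^ 2 + 2 * C ^ 2)) * √(‖u‖ ^ 2 + ‖p‖ ^ 2) := by
  rw [← Real.sqrt_mul (by positivity)]
  refine Real.sqrt_le_sqrt ?_
  have hw : ‖(l : ℂ) • u - vt‖ ≤ l * ‖u‖ + C * ‖p‖ := by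
    grw [norm_sub_le, norm_smul, Complex.norm_of_nonneg hl, hvt]
  have hr : ‖(l : ℂ) • p‖ = l * ‖p‖ := by rw [norm_smul, Complex.norm_of_nonneg hl]
  grw [hw, hr]
  nlinarith [sq_nonneg (l * ‖u‖ - C * ‖p‖), sq_nonneg (l * ‖p‖), sq_nonneg (C * ‖u‖)]

lemma three_quarters_mul_le_re_saddle_form_smul_sub (a : V →ₗ[ℂ] V →ₛₗ[starRingEnd ℂ] ℂ)
    (d : Q →ₗ[ℂ] V →ₛₗ[starRingEnd ℂ] ℂ) {α M C_b l : ℝ} (hM : 0 ≤ M) (hl₀ : 0 ≤ l)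
    (hl : l * α = 1 + 2 * C_b ^ 2 * M ^ 2) (hcoer : ∀ v : V, α * ‖v‖ ^ 2 ≤ (a v v).re)
    (hcont : ∀ u v : V, ‖a u v‖ ≤ M * ‖u‖ * ‖v‖) {u vt : V} {p : Q}
    (hdvt : d p vt = (‖p‖ : ℂ) ^ 2) (hvt : ‖vt‖ ≤ C_b * ‖p‖) :
    3 / 4 * (‖u‖ ^ 2 + ‖p‖ ^ 2) ≤
      (a ((l : ℂ) • u - vt) u + d ((l : ℂ) • p) u - conj (d p ((l : ℂ) • u - vt))).re := by
  rw [re_saddle_form_smul_sub a d u vt p l (‖p‖ ^ 2) (by push_cast; exact hdvt)]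
  have hcoer_u : (1 + 2 * C_b ^ 2 * M ^ 2) * ‖u‖ ^ 2 ≤ l * (a u u).re := by
    rw [← hl, mul_assoc]
    exact mul_le_mul_of_nonneg_left (hcoer u) hl₀
  have hcross : (a vt u).re ≤ M * C_b * ‖p‖ * ‖u‖ :=
    calc (a vt u).re ≤ ‖a vt u‖ := Complex.re_le_norm _
      _ ≤ M * ‖vt‖ * ‖u‖ := hcont vt u
      _ ≤ M * (C_b * ‖p‖) * ‖u‖ := by grw [hvt]
      _ = M * C_b * ‖p‖ * ‖u‖ := by ring
  nlinarith [sq_nonneg (M * C_b * ‖u‖ - ‖p‖ / 2)]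

end Normed

lemma half_div_sqrt_mul_sqrt_two_mul_le {x : ℝ} (hx : 0 < x) : 1 / 2 / √x * √(2 * x) ≤ 3 / 4 := by
  have hsqrt2 : √2 ≤ 3 / 2 := Real.sqrt_le_iff.mpr ⟨by norm_num, by norm_num⟩
  have hsqrtx : √x ≠ 0 := (Real.sqrt_pos.mpr hx).ne'
  calc 1 / 2 / √x * √(2 * x) = √2 / 2 := by rw [Real.sqrt_mul zero_le_two]; field_simp
    _ ≤ 3 / 4 := by linarith

theorem oseen_saddle_infsup_first_argument_general
    {V Q : Type*} [NormedAddCommGroup V] [InnerProductSpace ℂ V]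
    [NormedAddCommGroup Q] [InnerProductSpace ℂ Q]
    (a : V →ₗ[ℂ] V →ₛₗ[starRingEnd ℂ] ℂ)
    (d : Q →ₗ[ℂ] V →ₛₗ[starRingEnd ℂ] ℂ)
    (α M M_d C_b : ℝ) (hα : 0 < α) (hM : 0 < M) (hMd : 0 < M_d)
    (hcoer : ∀ v : V, α * ‖v‖ ^ 2 ≤ (a v v).re)
    (hcont : ∀ u v : V, ‖a u v‖ ≤ M * ‖u‖ * ‖v‖)
    (hdbdd : ∀ (q : Q) (v : V), ‖d q v‖ ≤ M_d * ‖q‖ * ‖v‖)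
    (hinv : ∀ q : Q, ∃ vt : V, d q vt = (‖q‖ : ℂ) ^ 2 ∧ ‖vt‖ ≤ C_b * ‖q‖)
    (A : V × Q → V × Q → ℂ)
    (hA : ∀ (u : V) (p : Q) (v : V) (q : Q),
      A (u, p) (v, q) = a u v + d p v - starRingEnd ℂ (d q u))
    (γ : ℝ)
    (hγ : γ = (1 / 2) / Real.sqrt (α⁻¹ ^ 2 * (1 + 2 * C_b ^ 2 * M ^ 2) ^ 2 + 2 * C_b ^ 2))
    (u : V) (p : Q) (hup : (u, p) ≠ (0, 0)) :
    γ * Real.sqrt (‖u‖ ^ 2 + ‖p‖ ^ 2) ≤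
      sSup {s : ℝ | ∃ (w : V) (r : Q), (w, r) ≠ (0, 0) ∧
        s = ‖A (w, r) (u, p)‖ / Real.sqrt (‖w‖ ^ 2 + ‖r‖ ^ 2)} := by
  obtain ⟨vt, hdvt, hvt⟩ := hinv p
  set l := α⁻¹ * (1 + 2 * C_b ^ 2 * M ^ 2)
  have hl₀ : 0 ≤ l := by positivity
  have hl : l * α = 1 + 2 * C_b ^ 2 * M ^ 2 := by simp only [l]; field_simp
  have hval : 3 / 4 * √(‖u‖ ^ 2 + ‖p‖ ^ 2) ^ 2 ≤ ‖A ((l : ℂ) • u - vt, (l : ℂ) • p) (u, p)‖ := by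
    rw [Real.sq_sqrt (by positivity), hA]
    exact (three_quarters_mul_le_re_saddle_form_smul_sub a d hM.le hl₀ hl hcoer hcont hdvt
      hvt).trans (Complex.re_le_norm _)
  have hγK : γ * √(2 * (l ^ 2 + 2 * C_b ^ 2)) ≤ 3 / 4 := by
    rw [hγ, show α⁻¹ ^ 2 * (1 + 2 * C_b ^ 2 * M ^ 2) ^ 2 = l ^ 2 by ring]
    exact half_div_sqrt_mul_sqrt_two_mul_le (by positivity)
  refine le_sSup_div_sqrt_of_test_pair (fun w r => ‖A (w, r) (u, p)‖)
    (C := M * ‖u‖ + M_d * ‖u‖ + M_d * ‖p‖) (fun w r => ?_) (by rw [hγ]; positivity)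
    (Real.sqrt_pos.mpr (norm_sq_add_norm_sq_pos hup)) (by norm_num) hγK
    (sqrt_norm_smul_sub_sq_add_norm_smul_sq_le hl₀ hvt) hval
  rw [hA]
  exact norm_saddle_form_le a d hM.le hMd.le hcont hdbdd u w p r

/-- The combined Oseen-type saddle-point form `A` on `X = V × Q` satisfies an
inf-sup condition in its first argument with explicit constant
`γ = (1/2)·(α⁻²(1+2C_b²M²)² + 2C_b²)^(-1/2)`. -/
theorem oseen_saddle_infsup_first_argument
    {V Q : Type*} [NormedAddCommGroup V] [InnerProductSpace ℂ V] [CompleteSpace V]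
    [NormedAddCommGroup Q] [InnerProductSpace ℂ Q] [CompleteSpace Q]
    (a : V →ₗ[ℂ] V →ₛₗ[starRingEnd ℂ] ℂ)
    (d : Q →ₗ[ℂ] V →ₛₗ[starRingEnd ℂ] ℂ)
    (α M M_d C_b : ℝ) (hα : 0 < α) (hM : 0 < M) (hMd : 0 < M_d) (hCb : 0 < C_b)
    (hcoer : ∀ v : V, α * ‖v‖ ^ 2 ≤ (a v v).re)
    (hcont : ∀ u v : V, ‖a u v‖ ≤ M * ‖u‖ * ‖v‖)
    (hdbdd : ∀ (q : Q) (v : V), ‖d q v‖ ≤ M_d * ‖q‖ * ‖v‖)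
    (hinv : ∀ q : Q, ∃ vt : V, d q vt = (‖q‖ : ℂ) ^ 2 ∧ ‖vt‖ ≤ C_b * ‖q‖)
    (A : V × Q → V × Q → ℂ)
    (hA : ∀ (u : V) (p : Q) (v : V) (q : Q),
      A (u, p) (v, q) = a u v + d p v - starRingEnd ℂ (d q u))
    (γ : ℝ)
    (hγ : γ = (1 / 2) / Real.sqrt (α⁻¹ ^ 2 * (1 + 2 * C_b ^ 2 * M ^ 2) ^ 2 + 2 * C_b ^ 2))
    (u : V) (p : Q) (hup : (u, p) ≠ (0, 0)) :
    γ * Real.sqrt (‖u‖ ^ 2 + ‖p‖ ^ 2) ≤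
      sSup {s : ℝ | ∃ (w : V) (r : Q), (w, r) ≠ (0, 0) ∧
        s = ‖A (w, r) (u, p)‖ / Real.sqrt (‖w‖ ^ 2 + ‖r‖ ^ 2)} :=
  oseen_saddle_infsup_first_argument_general a d α M M_d C_b hα hM hMd hcoer hcont hdbdd hinv A hA γ
    hγ u p hup
end

section
/- For every (v,q) ∈ V × Q there exists a pair (w,r) ∈ V × Q such that (‖w‖_V² + ‖r‖_Q²)^{1/2} ≤ √2/γ and ‖v‖_V + ‖q‖_Q ≤ Re A((v,q);(w,r)), where γ := (1/2) · (α⁻²(1 + 2C_b²M²)² + 2C_b²)^{-1/2}. -/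
/-!
Test `(v, q)` against `(w₀, r₀) = (t v + 2γ ṽ, t q)` with `t = γ (1 + 2 C_b² M²) / α` and `ṽ` the
right inverse of `d` at `q`. The coupling terms `t d(q, v)` cancel in `Re A`, and coercivity plus
continuity of `a` leave `Re A((v,q);(w₀,r₀)) ≥ γ (‖v‖² + ‖q‖²)`; the value of `γ` is what makes
`‖(w₀, r₀)‖ ≤ ‖(v, q)‖`. Rescaling `(w₀, r₀)` by `√2 / (γ ‖(v, q)‖)` and using
`‖v‖ + ‖q‖ ≤ √2 ‖(v, q)‖` gives the claim.
-/

open ComplexConjugate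

theorem add_le_sqrt_two_mul_sqrt_sq_add_sq (x y : ℝ) :
    x + y ≤ √2 * √(x ^ 2 + y ^ 2) := by
  rw [← Real.sqrt_mul zero_le_two]
  exact Real.le_sqrt_of_sq_le (by nlinarith [sq_nonneg (x - y)])

theorem exists_rescaled_test_pair {V Q : Type*} [NormedAddCommGroup V] [NormedSpace ℝ V]
    [NormedAddCommGroup Q] [NormedSpace ℝ Q] (B : V → Q → ℝ)
    (hB : ∀ (c : ℝ) w r, B (c • w) (c • r) = c * B w r) {γ x y : ℝ} (hγ : 0 < γ)
    {w₀ : V} {r₀ : Q} (hnorm : ‖w₀‖ ^ 2 + ‖r₀‖ ^ 2 ≤ x ^ 2 + y ^ 2)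
    (hB₀ : γ * (x ^ 2 + y ^ 2) ≤ B w₀ r₀) :
    ∃ (w : V) (r : Q), √(‖w‖ ^ 2 + ‖r‖ ^ 2) ≤ √2 / γ ∧ x + y ≤ B w r := by
  set N := √(x ^ 2 + y ^ 2)
  have hN : N ^ 2 = x ^ 2 + y ^ 2 := Real.sq_sqrt (by positivity)
  -- for `N = 0` this is `c = 0`, and the zero pair works
  set c := √2 / (γ * N)
  have hc : 0 ≤ c := by positivity
  refine ⟨c • w₀, c • r₀, ?_, ?_⟩
  · calc √(‖c • w₀‖ ^ 2 + ‖c • r₀‖ ^ 2) = c * √(‖w₀‖ ^ 2 + ‖r₀‖ ^ 2) := by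
          simp only [norm_smul, mul_pow, Real.norm_eq_abs, sq_abs]
          rw [← mul_add, Real.sqrt_mul' _ (by positivity), Real.sqrt_sq hc]
      _ ≤ c * N := by gcongr; exact Real.sqrt_le_sqrt hnorm
      _ = √2 / γ * (N / N) := by ring
      _ ≤ √2 / γ := mul_le_of_le_one_right (by positivity) (div_self_le_one N)
  · have hcγN : c * (γ * N ^ 2) = √2 * N := by
      rcases eq_or_ne N 0 with h | h
      · simp [h]
      · simp only [c]; field_simp
    calc x + y ≤ √2 * N := add_le_sqrt_two_mul_sqrt_sq_add_sq x y
      _ = c * (γ * (x ^ 2 + y ^ 2)) := by rw [← hcγN, hN]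
      _ ≤ c * B w₀ r₀ := by gcongr
      _ = B (c • w₀) (c • r₀) := (hB c w₀ r₀).symm

theorem norm_sq_add_norm_sq_testPair_le {V Q : Type*} [NormedAddCommGroup V] [NormedSpace ℝ V]
    [NormedAddCommGroup Q] [NormedSpace ℝ Q] {v vt : V} {q : Q} {t s C : ℝ}
    (hvt : ‖vt‖ ≤ C * ‖q‖) (ht : 2 * t ^ 2 ≤ 1) (hts : t ^ 2 + 2 * s ^ 2 * C ^ 2 ≤ 1) :
    ‖t • v + s • vt‖ ^ 2 + ‖t • q‖ ^ 2 ≤ ‖v‖ ^ 2 + ‖q‖ ^ 2 := by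
  have hw : ‖t • v + s • vt‖ ≤ |t| * ‖v‖ + |s| * ‖vt‖ := by
    simpa only [norm_smul, Real.norm_eq_abs] using norm_add_le (t • v) (s • vt)
  have hvt2 : ‖vt‖ ^ 2 ≤ C ^ 2 * ‖q‖ ^ 2 := by
    rw [← mul_pow]; exact pow_le_pow_left₀ (norm_nonneg _) hvt 2
  have hw2 : ‖t • v + s • vt‖ ^ 2 ≤ 2 * t ^ 2 * ‖v‖ ^ 2 + 2 * s ^ 2 * ‖vt‖ ^ 2 := by
    calc ‖t • v + s • vt‖ ^ 2 ≤ (|t| * ‖v‖ + |s| * ‖vt‖) ^ 2 := by gcongr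
      _ ≤ 2 * t ^ 2 * ‖v‖ ^ 2 + 2 * s ^ 2 * ‖vt‖ ^ 2 := by
        nlinarith [sq_nonneg (|t| * ‖v‖ - |s| * ‖vt‖), sq_abs t, sq_abs s]
  rw [norm_smul, Real.norm_eq_abs, mul_pow, sq_abs]
  nlinarith [mul_le_mul_of_nonneg_right ht (sq_nonneg ‖v‖),
    mul_le_mul_of_nonneg_right hts (sq_nonneg ‖q‖), sq_nonneg s]

section OseenForm

variable {V Q : Type*} [NormedAddCommGroup V] [InnerProductSpace ℂ V]
  [NormedAddCommGroup Q] [InnerProductSpace ℂ Q]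
  (a : V →ₗ[ℂ] V →ₛₗ[starRingEnd ℂ] ℂ) (d : Q →ₗ[ℂ] V →ₛₗ[starRingEnd ℂ] ℂ)

def oseenForm (x y : V × Q) : ℂ :=
  a x.1 y.1 + d x.2 y.1 - conj (d y.2 x.1)

theorem oseenForm_real_smul_right (c : ℝ) (x : V × Q) (w : V) (r : Q) :
    oseenForm a d x (c • w, c • r) = c * oseenForm a d x (w, r) := by
  simp only [oseenForm, ← Complex.coe_smul, map_smulₛₗ, LinearMap.smul_apply,
    smul_eq_mul, Complex.conj_ofReal, map_mul, RingHom.id_apply]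
  ring

theorem re_oseenForm_testPair {v vt : V} {q : Q} (hvt : d q vt = (‖q‖ : ℂ) ^ 2) (t s : ℝ) :
    (oseenForm a d (v, q) (t • v + s • vt, t • q)).re
      = t * (a v v).re + s * (a v vt).re + s * ‖q‖ ^ 2 := by
  simp only [oseenForm, ← Complex.coe_smul, map_add, map_smulₛₗ, LinearMap.smul_apply,
    smul_eq_mul, RingHom.id_apply, Complex.conj_ofReal, map_mul, hvt, ← Complex.ofReal_pow,
    Complex.sub_re, Complex.add_re, Complex.re_ofReal_mul, Complex.ofReal_re, Complex.conj_re]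
  ring

theorem le_re_oseenForm_testPair {α M C γ : ℝ} (hα : 0 < α) (hM : 0 ≤ M) (hγ : 0 ≤ γ)
    (hcoer : ∀ v : V, α * ‖v‖ ^ 2 ≤ (a v v).re) (hcont : ∀ u v : V, ‖a u v‖ ≤ M * ‖u‖ * ‖v‖)
    {v vt : V} {q : Q} (hdvt : d q vt = (‖q‖ : ℂ) ^ 2) (hvt : ‖vt‖ ≤ C * ‖q‖) :
    γ * (‖v‖ ^ 2 + ‖q‖ ^ 2) ≤ (oseenForm a d (v, q)
      ((γ * (1 + 2 * C ^ 2 * M ^ 2) / α) • v + (2 * γ) • vt,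
        (γ * (1 + 2 * C ^ 2 * M ^ 2) / α) • q)).re := by
  rw [re_oseenForm_testPair a d hdvt]
  have hvv : γ * (1 + 2 * C ^ 2 * M ^ 2) * ‖v‖ ^ 2
      ≤ γ * (1 + 2 * C ^ 2 * M ^ 2) / α * (a v v).re := by
    calc γ * (1 + 2 * C ^ 2 * M ^ 2) * ‖v‖ ^ 2
        = γ * (1 + 2 * C ^ 2 * M ^ 2) / α * (α * ‖v‖ ^ 2) := by field_simp
      _ ≤ _ := by gcongr; exact hcoer v
  have hvvt : -(M * C * ‖v‖ * ‖q‖) ≤ (a v vt).re := by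
    calc -(M * C * ‖v‖ * ‖q‖) = -(M * ‖v‖ * (C * ‖q‖)) := by ring
      _ ≤ -(M * ‖v‖ * ‖vt‖) := by gcongr
      _ ≤ -‖a v vt‖ := neg_le_neg (hcont v vt)
      _ ≤ (a v vt).re := neg_le_of_abs_le (Complex.abs_re_le_norm _)
  -- the excess over `γ (‖v‖² + ‖q‖²)` is `γ ((M C ‖v‖ - ‖q‖)² + (M C ‖v‖)²)`
  nlinarith [mul_nonneg hγ (sq_nonneg (M * C * ‖v‖ - ‖q‖)), mul_nonneg hγ (sq_nonneg (M * C * ‖v‖))]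

end OseenForm

theorem oseen_saddle_stability_primal_general
    {V Q : Type*} [NormedAddCommGroup V] [InnerProductSpace ℂ V]
    [NormedAddCommGroup Q] [InnerProductSpace ℂ Q]
    (a : V →ₗ[ℂ] V →ₛₗ[starRingEnd ℂ] ℂ)
    (d : Q →ₗ[ℂ] V →ₛₗ[starRingEnd ℂ] ℂ)
    (α M C_b : ℝ) (hα : 0 < α) (hM : 0 < M)
    (hcoer : ∀ v : V, α * ‖v‖ ^ 2 ≤ (a v v).re)
    (hcont : ∀ u v : V, ‖a u v‖ ≤ M * ‖u‖ * ‖v‖)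
    (hinv : ∀ q : Q, ∃ vt : V, d q vt = (‖q‖ : ℂ) ^ 2 ∧ ‖vt‖ ≤ C_b * ‖q‖)
    (A : V × Q → V × Q → ℂ)
    (hA : ∀ (u : V) (p : Q) (v : V) (q : Q),
      A (u, p) (v, q) = a u v + d p v - starRingEnd ℂ (d q u))
    (γ : ℝ)
    (hγ : γ = (1 / 2) / Real.sqrt (α⁻¹ ^ 2 * (1 + 2 * C_b ^ 2 * M ^ 2) ^ 2 + 2 * C_b ^ 2))
    (v : V) (q : Q) :
    ∃ (w : V) (r : Q),
      Real.sqrt (‖w‖ ^ 2 + ‖r‖ ^ 2) ≤ Real.sqrt 2 / γ ∧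
      ‖v‖ + ‖q‖ ≤ (A (v, q) (w, r)).re := by
  obtain rfl : A = oseenForm a d := funext₂ fun x y => hA x.1 x.2 y.1 y.2
  obtain ⟨vt, hdvt, hvt⟩ := hinv q
  have hD : 0 < α⁻¹ ^ 2 * (1 + 2 * C_b ^ 2 * M ^ 2) ^ 2 + 2 * C_b ^ 2 := by positivity
  have hγpos : 0 < γ := hγ ▸ by positivity
  have hγD : γ ^ 2 * (α⁻¹ ^ 2 * (1 + 2 * C_b ^ 2 * M ^ 2) ^ 2 + 2 * C_b ^ 2) = 1 / 4 := by
    rw [hγ, div_pow, Real.sq_sqrt hD.le]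
    field_simp
    norm_num
  have ht : (γ * (1 + 2 * C_b ^ 2 * M ^ 2) / α) ^ 2
      = γ ^ 2 * (α⁻¹ ^ 2 * (1 + 2 * C_b ^ 2 * M ^ 2) ^ 2) := by
    field_simp
  refine exists_rescaled_test_pair (fun w r => (oseenForm a d (v, q) (w, r)).re)
    (fun c w r => by simp only [oseenForm_real_smul_right, Complex.re_ofReal_mul]) hγpos
    (norm_sq_add_norm_sq_testPair_le hvt (by nlinarith) (by nlinarith))
    (le_re_oseenForm_testPair a d hα hM.le hγpos.le hcoer hcont hdvt hvt)

/-- Stability of the Oseen-type saddle-point form `A` (acting through its second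
argument): for every `(v,q)` there is a test pair `(w,r)` of norm at most `√2/γ`
with `‖v‖ + ‖q‖ ≤ Re A((v,q);(w,r))`. -/
theorem oseen_saddle_stability_primal
    {V Q : Type*} [NormedAddCommGroup V] [InnerProductSpace ℂ V] [CompleteSpace V]
    [NormedAddCommGroup Q] [InnerProductSpace ℂ Q] [CompleteSpace Q]
    (a : V →ₗ[ℂ] V →ₛₗ[starRingEnd ℂ] ℂ)
    (d : Q →ₗ[ℂ] V →ₛₗ[starRingEnd ℂ] ℂ)
    (α M M_d C_b : ℝ) (hα : 0 < α) (hM : 0 < M) (hMd : 0 < M_d) (hCb : 0 < C_b)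
    (hcoer : ∀ v : V, α * ‖v‖ ^ 2 ≤ (a v v).re)
    (hcont : ∀ u v : V, ‖a u v‖ ≤ M * ‖u‖ * ‖v‖)
    (hdbdd : ∀ (q : Q) (v : V), ‖d q v‖ ≤ M_d * ‖q‖ * ‖v‖)
    (hinv : ∀ q : Q, ∃ vt : V, d q vt = (‖q‖ : ℂ) ^ 2 ∧ ‖vt‖ ≤ C_b * ‖q‖)
    (A : V × Q → V × Q → ℂ)
    (hA : ∀ (u : V) (p : Q) (v : V) (q : Q),
      A (u, p) (v, q) = a u v + d p v - starRingEnd ℂ (d q u))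
    (γ : ℝ)
    (hγ : γ = (1 / 2) / Real.sqrt (α⁻¹ ^ 2 * (1 + 2 * C_b ^ 2 * M ^ 2) ^ 2 + 2 * C_b ^ 2))
    (v : V) (q : Q) :
    ∃ (w : V) (r : Q),
      Real.sqrt (‖w‖ ^ 2 + ‖r‖ ^ 2) ≤ Real.sqrt 2 / γ ∧
      ‖v‖ + ‖q‖ ≤ (A (v, q) (w, r)).re :=
  oseen_saddle_stability_primal_general a d α M C_b hα hM hcoer hcont hinv A hA γ hγ v q
end

section
/- Let f ∈ H. Suppose (u,p) ∈ V × Q solves the Oseen source problem: a(u,v) + d(p,v) = ⟨f, ι v⟩_H for all v ∈ V and d(q,u) = 0 for all q ∈ Q, and suppose (u_S,p_S) ∈ V × Q solves the corresponding Stokes source problem (the same system with the convective form removed): ν⟨u_S,v⟩_V + d(p_S,v) = ⟨f, ι v⟩_H for all v ∈ V and d(q,u_S) = 0 for all q ∈ Q. Then the energy estimate ν‖u − u_S‖_V² ≤ B‖u‖_V‖ι(u − u_S)‖_H holds. -/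
/-!
Testing the Oseen and Stokes equations with the difference `w = u - u_S`, which both
divergence constraints annihilate under `d`, removes the datum and both pressures and leaves
`ν ‖w‖² = -Re c(u, w) ≤ |c(u, w)|`.
-/

open scoped InnerProductSpace

section OseenStokes

variable {𝕜 V Q : Type*} [RCLike 𝕜] [NormedAddCommGroup V] [InnerProductSpace 𝕜 V]

theorem re_ofReal_mul_inner_self (ν : ℝ) (w : V) :
    RCLike.re ((ν : 𝕜) * ⟪w, w⟫_𝕜) = ν * ‖w‖ ^ 2 := by
  rw [RCLike.re_ofReal_mul, inner_self_eq_norm_sq]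

variable [AddCommGroup Q] [Module 𝕜 Q]

theorem oseen_sub_stokes_inner_self_add_convective_eq_zero
    (ν : ℝ) (c : V →ₗ[𝕜] V →ₛₗ[starRingEnd 𝕜] 𝕜) (d : Q →ₗ[𝕜] V →ₛₗ[starRingEnd 𝕜] 𝕜)
    (ℓ : V → 𝕜) (u u_S : V) (p p_S : Q)
    (hsol : ∀ v : V, (ν : 𝕜) * ⟪v, u⟫_𝕜 + c u v + d p v = ℓ v)
    (hdiv : ∀ q : Q, d q u = 0)
    (hsolS : ∀ v : V, (ν : 𝕜) * ⟪v, u_S⟫_𝕜 + d p_S v = ℓ v)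
    (hdivS : ∀ q : Q, d q u_S = 0) :
    (ν : 𝕜) * ⟪u - u_S, u - u_S⟫_𝕜 + c u (u - u_S) = 0 := by
  have hdw : ∀ q : Q, d q (u - u_S) = 0 := fun q => by rw [map_sub, hdiv, hdivS, sub_zero]
  have hO := hsol (u - u_S)
  have hS := hsolS (u - u_S)
  rw [hdw] at hO hS
  rw [inner_sub_right]
  linear_combination hO - hS

end OseenStokes

theorem oseen_stokes_energy_estimate_general
    {V H Q : Type*} [NormedAddCommGroup V] [InnerProductSpace ℂ V]
    [NormedAddCommGroup H] [InnerProductSpace ℂ H]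
    [NormedAddCommGroup Q] [InnerProductSpace ℂ Q]
    (ι : V →L[ℂ] H)
    (ν : ℝ)
    (c : V →ₗ[ℂ] V →ₛₗ[starRingEnd ℂ] ℂ) (B : ℝ)
    (hcb : ∀ u v : V, ‖c u v‖ ≤ B * ‖u‖ * ‖ι v‖)
    (d : Q →ₗ[ℂ] V →ₛₗ[starRingEnd ℂ] ℂ)
    (f : H) (u u_S : V) (p p_S : Q)
    (hsol : ∀ v : V,
      (ν : ℂ) * (inner ℂ v u : ℂ) + c u v + d p v = (inner ℂ (ι v) f : ℂ))
    (hdiv : ∀ q : Q, d q u = 0)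
    (hsolS : ∀ v : V,
      (ν : ℂ) * (inner ℂ v u_S : ℂ) + d p_S v = (inner ℂ (ι v) f : ℂ))
    (hdivS : ∀ q : Q, d q u_S = 0) :
    ν * ‖u - u_S‖ ^ 2 ≤ B * ‖u‖ * ‖ι (u - u_S)‖ := by
  have hkey := oseen_sub_stokes_inner_self_add_convective_eq_zero ν c d _ u u_S p p_S
    hsol hdiv hsolS hdivS
  have henergy : ν * ‖u - u_S‖ ^ 2 = -(c u (u - u_S)).re := by
    have hre := congrArg RCLike.re hkey
    rw [map_add, re_ofReal_mul_inner_self, map_zero] at hre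
    rw [← RCLike.re_to_complex]
    linarith
  calc ν * ‖u - u_S‖ ^ 2 = -(c u (u - u_S)).re := henergy
    _ = (-c u (u - u_S)).re := (Complex.neg_re _).symm
    _ ≤ ‖-c u (u - u_S)‖ := Complex.re_le_norm _
    _ = ‖c u (u - u_S)‖ := norm_neg _
    _ ≤ B * ‖u‖ * ‖ι (u - u_S)‖ := hcb u (u - u_S)

/-- Energy estimate comparing the Oseen and Stokes source problems with the same
datum `f`: the velocities satisfy `ν‖u − u_S‖_V² ≤ B‖u‖_V‖ι(u − u_S)‖_H`. -/
theorem oseen_stokes_energy_estimate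
    {V H Q : Type*} [NormedAddCommGroup V] [InnerProductSpace ℂ V] [CompleteSpace V]
    [NormedAddCommGroup H] [InnerProductSpace ℂ H] [CompleteSpace H]
    [NormedAddCommGroup Q] [InnerProductSpace ℂ Q] [CompleteSpace Q]
    (ι : V →L[ℂ] H) (C_p : ℝ) (hCp : 0 < C_p)
    (hι : ∀ v : V, ‖ι v‖ ≤ C_p * ‖v‖)
    (ν : ℝ) (hν : 0 < ν)
    (c : V →ₗ[ℂ] V →ₛₗ[starRingEnd ℂ] ℂ) (B : ℝ) (hB : 0 ≤ B)
    (hc0 : ∀ v : V, (c v v).re = 0)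
    (hcb : ∀ u v : V, ‖c u v‖ ≤ B * ‖u‖ * ‖ι v‖)
    (d : Q →ₗ[ℂ] V →ₛₗ[starRingEnd ℂ] ℂ) (M_d : ℝ)
    (hd : ∀ (q : Q) (v : V), ‖d q v‖ ≤ M_d * ‖q‖ * ‖v‖)
    (f : H) (u u_S : V) (p p_S : Q)
    (hsol : ∀ v : V,
      (ν : ℂ) * (inner ℂ v u : ℂ) + c u v + d p v = (inner ℂ (ι v) f : ℂ))
    (hdiv : ∀ q : Q, d q u = 0)
    (hsolS : ∀ v : V,
      (ν : ℂ) * (inner ℂ v u_S : ℂ) + d p_S v = (inner ℂ (ι v) f : ℂ))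
    (hdivS : ∀ q : Q, d q u_S = 0) :
    ν * ‖u - u_S‖ ^ 2 ≤ B * ‖u‖ * ‖ι (u - u_S)‖ :=
  oseen_stokes_energy_estimate_general ι ν c B hcb d f u u_S p p_S hsol hdiv hsolS hdivS
end

section
/- Suppose: (i) A(u, y) = λ·m(u, y) for all y ∈ X (primal eigenpair); (ii) A(y, u*) = λ·m(y, u*) for all y ∈ X (dual eigenpair with the same eigenvalue); (iii) A(u_h, y) = λ_h·m(u_h, y) for all y ∈ X_h (discrete primal eigenpair in the subspace X_h). Then the eigenvalue error identity (λ_h − λ)·m(u_h, u_h*) = A(u − u_h, u* − u_h*) − λ·m(u − u_h, u* − u_h*) holds. -/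
/-- Eigenvalue error identity for a non-selfadjoint eigenvalue problem with a
conforming discretization: if `(λ,u)` is a primal eigenpair, `(λ,u*)` a dual
eigenpair and `(λ_h,u_h)` a discrete primal eigenpair in the subspace `X_h`, then
`(λ_h − λ)·m(u_h,u_h*) = A(u − u_h, u* − u_h*) − λ·m(u − u_h, u* − u_h*)`. -/
theorem eigenvalue_error_identity
    {X : Type*} [AddCommGroup X] [Module ℂ X]
    (X_h : Submodule ℂ X)
    (A m : X →ₗ[ℂ] X →ₛₗ[starRingEnd ℂ] ℂ)
    (lam lam_h : ℂ) (u ustar u_h ustar_h : X)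
    (hu_h : u_h ∈ X_h) (hustar_h : ustar_h ∈ X_h)
    (hprimal : ∀ y : X, A u y = lam * m u y)
    (hdual : ∀ y : X, A y ustar = lam * m y ustar)
    (hdisc : ∀ y ∈ X_h, A u_h y = lam_h * m u_h y) :
    (lam_h - lam) * m u_h ustar_h =
      A (u - u_h) (ustar - ustar_h) - lam * m (u - u_h) (ustar - ustar_h) := by
  simp only [map_sub, LinearMap.sub_apply]
  rw [hprimal, hprimal, hdual, hdisc ustar_h hustar_h]
  ring
end

section
/- Suppose: (i) A(u, y) = λ·m(u, y) for all y ∈ X; (ii) A(y, u*) = λ·m(y, u*) for all y ∈ X; (iii) A(u_h, y) = λ_h·m(u_h, y) for all y ∈ X_h; (iv) |A(x,y)| ≤ M_A‖x‖‖y‖ for all x,y ∈ X; (v) |m(x,y)| ≤ N(x)·N(y) for all x,y ∈ X, where N : X → ℝ is a seminorm; and (vi) |m(u_h, u_h*)| ≥ C₀ for some constant C₀ > 0. Then the eigenvalue error bound |λ − λ_h| ≤ (1/(2C₀)) · ( M_A(‖u − u_h‖² + ‖u* − u_h*‖²) + |λ|(N(u − u_h)² + N(u* − u_h*)²) ) holds.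 -/
/-- Double-order eigenvalue error bound: under continuity of `A` (with constant
`M_A`), a seminorm bound for `m`, and the non-degeneracy `|m(u_h,u_h*)| ≥ C₀`,
the eigenvalue error satisfies
`|λ − λ_h| ≤ (1/(2C₀))·(M_A(‖u − u_h‖² + ‖u* − u_h*‖²) + |λ|(N(u − u_h)² + N(u* − u_h*)²))`. -/
theorem eigenvalue_error_bound
    {X : Type*} [NormedAddCommGroup X] [NormedSpace ℂ X]
    (X_h : Submodule ℂ X)
    (A m : X →ₗ[ℂ] X →ₛₗ[starRingEnd ℂ] ℂ)
    (N : Seminorm ℂ X)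
    (lam lam_h : ℂ) (u ustar u_h ustar_h : X)
    (hu_h : u_h ∈ X_h) (hustar_h : ustar_h ∈ X_h)
    (hprimal : ∀ y : X, A u y = lam * m u y)
    (hdual : ∀ y : X, A y ustar = lam * m y ustar)
    (hdisc : ∀ y ∈ X_h, A u_h y = lam_h * m u_h y)
    (M_A : ℝ) (hAcont : ∀ x y : X, ‖A x y‖ ≤ M_A * ‖x‖ * ‖y‖)
    (hmbdd : ∀ x y : X, ‖m x y‖ ≤ N x * N y)
    (C₀ : ℝ) (hC₀ : 0 < C₀) (hnondeg : C₀ ≤ ‖m u_h ustar_h‖) :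
    ‖lam - lam_h‖ ≤ (1 / (2 * C₀)) *
      (M_A * (‖u - u_h‖ ^ 2 + ‖ustar - ustar_h‖ ^ 2) +
       ‖lam‖ * (N (u - u_h) ^ 2 + N (ustar - ustar_h) ^ 2)) := by
  have key : (lam - lam_h) * m u_h ustar_h =
      lam * m (u - u_h) (ustar - ustar_h) - A (u - u_h) (ustar - ustar_h) := by
    have h1 := hprimal ustar
    have h2 := hprimal ustar_h
    have h3 := hdual u_h
    have h4 := hdisc ustar_h hustar_h
    simp only [map_sub, LinearMap.sub_apply]
    linear_combination h1 - h2 - h3 + h4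
  have hstep : ‖lam - lam_h‖ * C₀ ≤
      M_A * ‖u - u_h‖ * ‖ustar - ustar_h‖ +
      ‖lam‖ * (N (u - u_h) * N (ustar - ustar_h)) := by
    have h5 : ‖lam - lam_h‖ * C₀ ≤ ‖(lam - lam_h) * m u_h ustar_h‖ := by
      rw [norm_mul]
      exact mul_le_mul_of_nonneg_left hnondeg (norm_nonneg _)
    have h6 : ‖(lam - lam_h) * m u_h ustar_h‖ ≤
        ‖lam‖ * ‖m (u - u_h) (ustar - ustar_h)‖ + ‖A (u - u_h) (ustar - ustar_h)‖ := by
      rw [key]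
      calc ‖lam * m (u - u_h) (ustar - ustar_h) - A (u - u_h) (ustar - ustar_h)‖
          ≤ ‖lam * m (u - u_h) (ustar - ustar_h)‖ + ‖A (u - u_h) (ustar - ustar_h)‖ :=
            norm_sub_le _ _
        _ = _ := by rw [norm_mul]
    have h7 := hAcont (u - u_h) (ustar - ustar_h)
    have h8 := hmbdd (u - u_h) (ustar - ustar_h)
    have h9 : (0:ℝ) ≤ ‖lam‖ := norm_nonneg _
    nlinarith [mul_le_mul_of_nonneg_left h8 h9]
  have hl : (0:ℝ) ≤ ‖lam‖ := norm_nonneg _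
  have h2C : (0:ℝ) < 2 * C₀ := by linarith
  rw [one_div, inv_mul_eq_div, le_div_iff₀ h2C]
  rcases le_or_gt 0 M_A with hMA | hMA
  · nlinarith [hstep, mul_nonneg hMA (sq_nonneg (‖u - u_h‖ - ‖ustar - ustar_h‖)),
      mul_nonneg hl (sq_nonneg (N (u - u_h) - N (ustar - ustar_h)))]
  · have ha : ‖u - u_h‖ = 0 := by
      rcases (norm_nonneg (u - u_h)).eq_or_lt with h | h
      · exact h.symm
      · exact absurd (le_trans (norm_nonneg _) (hAcont (u - u_h) (u - u_h)))
          (by rw [mul_assoc]; exact (mul_neg_of_neg_of_pos hMA (mul_pos h h)).not_ge)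
    have hb : ‖ustar - ustar_h‖ = 0 := by
      rcases (norm_nonneg (ustar - ustar_h)).eq_or_lt with h | h
      · exact h.symm
      · exact absurd (le_trans (norm_nonneg _) (hAcont (ustar - ustar_h) (ustar - ustar_h)))
          (by rw [mul_assoc]; exact (mul_neg_of_neg_of_pos hMA (mul_pos h h)).not_ge)
    rw [ha, hb] at hstep ⊢
    nlinarith [hstep, mul_nonneg hl (sq_nonneg (N (u - u_h) - N (ustar - ustar_h)))]
end

section
/- Let T be a bounded linear operator on E and let (T_h)_{h>0} be a family of bounded linear operators on E such that ‖T − T_h‖ → 0 as h → 0⁺. Then for every open set V ⊆ ℂ containing the spectrum of T, there exists h₀ > 0 such that for all 0 < h < h₀ the spectrum of T_h is contained in V. (In particular, the approximating family introduces no spurious spectrum.) -/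
/-- Spurious-free spectral approximation: if a family of bounded operators `T_h`
converges in operator norm to `T` as `h → 0⁺`, then for every open set `V ⊆ ℂ`
containing the spectrum of `T` there exists `h₀ > 0` such that the spectrum of
`T_h` is contained in `V` for all `0 < h < h₀`. -/
theorem spectrum_no_spurious_modes
    {E : Type*} [NormedAddCommGroup E] [NormedSpace ℂ E] [CompleteSpace E]
    (T : E →L[ℂ] E) (T_h : ℝ → E →L[ℂ] E)
    (hconv : Filter.Tendsto (fun h : ℝ => ‖T - T_h h‖)
      (nhdsWithin 0 (Set.Ioi 0)) (nhds 0))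
    (V : Set ℂ) (hV : IsOpen V) (hTV : spectrum ℂ T ⊆ V) :
    ∃ h₀ > 0, ∀ h : ℝ, 0 < h → h < h₀ → spectrum ℂ (T_h h) ⊆ V := by
  set R : ℝ := ‖T‖ + 1 with hR
  set K : Set ℂ := Vᶜ ∩ Metric.closedBall (0 : ℂ) R with hK
  have hKres : K ⊆ resolventSet ℂ T := by
    intro z hz
    by_contra hz'
    exact hz.1 (hTV (by rwa [spectrum, Set.mem_compl_iff]))
  have hKcompact : IsCompact K :=
    (isCompact_closedBall (0 : ℂ) R).inter_left hV.isClosed_compl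
  have hcont : ContinuousOn (fun z : ℂ => ‖resolvent T z‖) K := fun z hz =>
    ((spectrum.hasDerivAt_resolvent (hKres hz)).continuousAt.continuousWithinAt).norm
  -- get a bound M on the resolvent norm on K
  obtain ⟨M, hM0, hM⟩ : ∃ M : ℝ, 0 ≤ M ∧ ∀ z ∈ K, ‖resolvent T z‖ ≤ M := by
    rcases K.eq_empty_or_nonempty with hKe | hKne
    · exact ⟨0, le_refl 0, fun z hz => by simp [hKe] at hz⟩
    · obtain ⟨z₀, hz₀, hmax⟩ := hKcompact.exists_isMaxOn hKne hcont
      exact ⟨max ‖resolvent T z₀‖ 0, le_max_right _ _,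
        fun z hz => le_max_of_le_left (hmax hz)⟩
  set ε : ℝ := min 1 (M + 1)⁻¹ with hε
  have hεpos : 0 < ε := lt_min one_pos (inv_pos.mpr (by linarith))
  have hev : ∀ᶠ h in nhdsWithin (0 : ℝ) (Set.Ioi 0), ‖T - T_h h‖ < ε := by
    have := hconv (Metric.ball_mem_nhds (0 : ℝ) hεpos)
    filter_upwards [this] with h hh
    simpa [Real.dist_eq, abs_lt] using hh
  obtain ⟨u, hu, hsub⟩ := mem_nhdsGT_iff_exists_Ioo_subset.mp hev
  refine ⟨u, hu, fun h hh0 hhu z hzspec => ?_⟩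
  have hnorm : ‖T - T_h h‖ < ε := hsub ⟨hh0, hhu⟩
  by_contra hzV
  -- A is nontrivial since the spectrum of T_h h is nonempty
  rcases subsingleton_or_nontrivial (E →L[ℂ] E) with hA | hA
  · exact (spectrum.mem_iff.mp hzspec) (isUnit_of_subsingleton _)
  -- z lies in the closed ball of radius R
  have hz_ball : z ∈ Metric.closedBall (0 : ℂ) R := by
    have h1 : ‖(1 : E →L[ℂ] E)‖ ≤ 1 := ContinuousLinearMap.norm_id_le
    have h2 : ‖z‖ ≤ ‖T_h h‖ * ‖(1 : E →L[ℂ] E)‖ := spectrum.norm_le_norm_mul_of_mem hzspec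
    have h3 : ‖T_h h‖ ≤ ‖T‖ + ε := by
      calc ‖T_h h‖ = ‖T - (T - T_h h)‖ := by rw [sub_sub_cancel]
        _ ≤ ‖T‖ + ‖T - T_h h‖ := norm_sub_le _ _
        _ ≤ ‖T‖ + ε := by linarith
    have h4 : ε ≤ 1 := min_le_left _ _
    have h5 : (0:ℝ) ≤ ‖T_h h‖ := norm_nonneg _
    simp only [Metric.mem_closedBall, dist_zero_right]
    calc ‖z‖ ≤ ‖T_h h‖ * ‖(1 : E →L[ℂ] E)‖ := h2
      _ ≤ ‖T_h h‖ * 1 := by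
          exact mul_le_mul_of_nonneg_left h1 h5
      _ = ‖T_h h‖ := mul_one _
      _ ≤ ‖T‖ + 1 := by linarith
  have hzK : z ∈ K := ⟨hzV, hz_ball⟩
  -- z is in the resolvent set of T
  have hzres : z ∈ resolventSet ℂ T := hKres hzK
  set x : (E →L[ℂ] E)ˣ := hzres.unit with hx
  have hx_inv : (↑x⁻¹ : E →L[ℂ] E) = resolvent T z := by
    rw [resolvent, ← hzres.unit_spec, Ring.inverse_unit]
  have hinvnorm : ‖(↑x⁻¹ : E →L[ℂ] E)‖ ≤ M := by rw [hx_inv]; exact hM z hzK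
  have hinvpos : 0 < ‖(↑x⁻¹ : E →L[ℂ] E)‖ := Units.norm_pos x⁻¹
  have hlt : ‖(algebraMap ℂ (E →L[ℂ] E) z - T_h h) - (↑x : E →L[ℂ] E)‖ < ‖(↑x⁻¹ : E →L[ℂ] E)‖⁻¹ := by
    have hxval : (↑x : E →L[ℂ] E) = algebraMap ℂ (E →L[ℂ] E) z - T := rfl
    have : (algebraMap ℂ (E →L[ℂ] E) z - T_h h) - (↑x : E →L[ℂ] E) = T - T_h h := by
      rw [hxval]; abel
    rw [this]
    calc ‖T - T_h h‖ < ε := hnorm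
      _ ≤ (M + 1)⁻¹ := min_le_right _ _
      _ ≤ ‖(↑x⁻¹ : E →L[ℂ] E)‖⁻¹ := by
          apply inv_anti₀ hinvpos
          linarith
  exact (spectrum.mem_iff.mp hzspec) (x.ofNearby _ hlt).isUnit
end
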